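/- If the typed unification algorithm outputs false on input {t1 = t2}, then t1 and t2 are not unifiable, but there exists a substitution θ such that θ(t1) and θ(t2) have the same type, or the failure is due to the occurs check. -/
import Mathlib


/-- Base types for constants. -/
inductive Ty : Type
  | int | float | atom | str
  deriving DecidableEq

/-- First-order terms: variables, typed constants, and compound terms. -/
inductive Term : Type
  | var : ℕ → Term
  | const : ℕ → Ty → Term
  | app : ℕ → List Term → Term

mutual
  /-- Application of a substitution to a term. -/
  def subst (θ : ℕ → Term) : Term → Term
    | .var x => θ x
    | .const c τ => .const c τ
    | .app f ts => .app f (substList θ ts)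
  /-- Application of a substitution to a list of terms. -/
  def substList (θ : ℕ → Term) : List Term → List Term
    | [] => []
    | t :: ts => subst θ t :: substList θ ts
end

mutual
  /-- Occurrence of a variable in a term. -/
  def occurs (x : ℕ) : Term → Bool
    | .var y => x == y
    | .const _ _ => false
    | .app _ ts => occursList x ts
  /-- Occurrence of a variable in a list of terms. -/
  def occursList (x : ℕ) : List Term → Bool
    | [] => false
    | t :: ts => occurs x t || occursList x ts
end

/-- Composition of substitutions: (θ ∘ η)(X) = θ(η(X)). -/
def comp (θ η : ℕ → Term) : ℕ → Term := fun x => subst θ (η x)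

/-- The substitution binding the single variable x to t. -/
def single (x : ℕ) (t : Term) : ℕ → Term := fun y => if y = x then t else .var y

/-- θ is a unifier of t₁ and t₂. -/
def IsUnifier (θ : ℕ → Term) (t₁ t₂ : Term) : Prop := subst θ t₁ = subst θ t₂

/-- θ is a most general unifier of t₁ and t₂. -/
def IsMGU (θ : ℕ → Term) (t₁ t₂ : Term) : Prop :=
  IsUnifier θ t₁ t₂ ∧ ∀ η, IsUnifier η t₁ t₂ → ∃ δ, ∀ x, η x = subst δ (θ x)

/-- θ is idempotent. -/
def Idempotent (θ : ℕ → Term) : Prop := ∀ t, subst θ (subst θ t) = subst θ t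

/-- Configurations of the typed unification algorithm: a multiset of equations
together with the Boolean flag, or the halting value wrong. -/
inductive Config : Type
  | state : Multiset (Term × Term) → Bool → Config
  | wrong : Config

/-- Application of a single binding to an equation. -/
def substEq (x : ℕ) (t : Term) (e : Term × Term) : Term × Term :=
  (subst (single x t) e.1, subst (single x t) e.2)

/-- The rewrite rules of the typed unification algorithm. -/
inductive Step : Config → Config → Prop
  | decompose (f : ℕ) (ts ss : List Term) (R : Multiset (Term × Term)) (F : Bool)
      (h : ts.length = ss.length) :
      Step (.state ((Term.app f ts, Term.app f ss) ::ₘ R) F)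
           (.state (↑(ts.zip ss) + R) F)
  | clash (f g : ℕ) (ts ss : List Term) (R : Multiset (Term × Term)) (F : Bool)
      (h : f ≠ g ∨ ts.length ≠ ss.length) :
      Step (.state ((Term.app f ts, Term.app g ss) ::ₘ R) F) .wrong
  | constDel (c : ℕ) (τ : Ty) (R : Multiset (Term × Term)) (F : Bool) :
      Step (.state ((Term.const c τ, Term.const c τ) ::ₘ R) F) (.state R F)
  | constFalse (c d : ℕ) (τ : Ty) (R : Multiset (Term × Term)) (F : Bool) (h : c ≠ d) :
      Step (.state ((Term.const c τ, Term.const d τ) ::ₘ R) F) (.state R false)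
  | constWrong (c d : ℕ) (τ σ : Ty) (R : Multiset (Term × Term)) (F : Bool) (h : τ ≠ σ) :
      Step (.state ((Term.const c τ, Term.const d σ) ::ₘ R) F) .wrong
  | constApp (c : ℕ) (τ : Ty) (f : ℕ) (ts : List Term) (R : Multiset (Term × Term)) (F : Bool) :
      Step (.state ((Term.const c τ, Term.app f ts) ::ₘ R) F) .wrong
  | appConst (c : ℕ) (τ : Ty) (f : ℕ) (ts : List Term) (R : Multiset (Term × Term)) (F : Bool) :
      Step (.state ((Term.app f ts, Term.const c τ) ::ₘ R) F) .wrong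
  | varDel (x : ℕ) (R : Multiset (Term × Term)) (F : Bool) :
      Step (.state ((Term.var x, Term.var x) ::ₘ R) F) (.state R F)
  | orient (x : ℕ) (t : Term) (R : Multiset (Term × Term)) (F : Bool)
      (h : ∀ y, t ≠ Term.var y) :
      Step (.state ((t, Term.var x) ::ₘ R) F) (.state ((Term.var x, t) ::ₘ R) F)
  | eliminate (x : ℕ) (t : Term) (R : Multiset (Term × Term)) (F : Bool)
      (h₁ : occurs x t = false)
      (h₂ : ∃ e ∈ R, occurs x e.1 = true ∨ occurs x e.2 = true) :
      Step (.state ((Term.var x, t) ::ₘ R) F)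
           (.state ((Term.var x, t) ::ₘ R.map (substEq x t)) F)
  | occursFail (x : ℕ) (t : Term) (R : Multiset (Term × Term)) (F : Bool)
      (h₁ : occurs x t = true) (h₂ : t ≠ Term.var x) :
      Step (.state ((Term.var x, t) ::ₘ R) F) (.state R false)

/-- Reachability by rewrite steps. -/
def Reaches : Config → Config → Prop := Relation.ReflTransGen Step

/-- A configuration to which no rule applies. -/
def NormalCfg (c : Config) : Prop := ∀ c', ¬ Step c c'

/-- The typed unification algorithm on input S outputs wrong. -/
def OutputsWrong (S : Multiset (Term × Term)) : Prop :=
  Reaches (Config.state S true) Config.wrong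

/-- The typed unification algorithm on input S outputs false. -/
def OutputsFalse (S : Multiset (Term × Term)) : Prop :=
  ∃ S', Reaches (Config.state S true) (Config.state S' false) ∧ NormalCfg (Config.state S' false)

/-- The typed unification algorithm on input S₀ succeeds with solved set S. -/
def OutputsSet (S₀ S : Multiset (Term × Term)) : Prop :=
  Reaches (Config.state S₀ true) (Config.state S true) ∧ NormalCfg (Config.state S true)

/-- Types: base types and compound types f(σ₁,…,σₙ). -/
inductive Typ : Type
  | base : Ty → Typ
  | comp : ℕ → List Typ → Typ

/-- Typing of ground terms: each constant has its base type, and a compound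
term f(t₁,…,tₙ) has type f(σ₁,…,σₙ) when each tᵢ has type σᵢ. -/
inductive HasType : Term → Typ → Prop
  | const (c : ℕ) (τ : Ty) : HasType (Term.const c τ) (Typ.base τ)
  | app (f : ℕ) (ts : List Term) (σs : List Typ)
      (hlen : ts.length = σs.length)
      (h : ∀ i (h₁ : i < ts.length) (h₂ : i < σs.length),
        HasType (ts.get ⟨i, h₁⟩) (σs.get ⟨i, h₂⟩)) :
      HasType (Term.app f ts) (Typ.comp f σs)

/-- During the run on {t₁ = t₂}, an occurs-check violation X = t with X
occurring properly in t is encountered. -/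
def OccursCheckFailure (t₁ t₂ : Term) : Prop :=
  ∃ (x : ℕ) (t : Term) (R : Multiset (Term × Term)) (F : Bool),
    Reaches (Config.state {(t₁, t₂)} true) (Config.state ((Term.var x, t) ::ₘ R) F) ∧
    occurs x t = true ∧ t ≠ Term.var x

section Aux

/-- Mutual induction principle for terms. -/
theorem term_induction {P : Term → Prop} {Q : List Term → Prop}
    (hv : ∀ x, P (.var x)) (hc : ∀ c τ, P (.const c τ))
    (ha : ∀ f ts, Q ts → P (.app f ts))
    (hnil : Q []) (hcons : ∀ t ts, P t → Q ts → Q (t :: ts)) :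
    ∀ t, P t :=
  fun t => Term.rec (motive_1 := P) (motive_2 := Q) hv hc ha hnil hcons t

theorem substList_eq_map (θ : ℕ → Term) (ts : List Term) :
    substList θ ts = ts.map (subst θ) := by
  induction ts with
  | nil => simp [substList]
  | cons t ts ih => simp [substList, ih]

theorem occursList_eq (x : ℕ) (ts : List Term) :
    occursList x ts = ts.any (occurs x) := by
  induction ts with
  | nil => simp [occursList]
  | cons t ts ih => simp [occursList, ih]

mutual
  def sizeT : Term → ℕ
    | .var _ => 1
    | .const _ _ => 1
    | .app _ ts => 1 + sizeL ts
  def sizeL : List Term → ℕ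
    | [] => 0
    | t :: ts => sizeT t + sizeL ts
end

theorem occurs_size (x : ℕ) (θ : ℕ → Term) : ∀ t : Term, occurs x t = true →
    sizeT (θ x) ≤ sizeT (subst θ t) ∧ (t ≠ .var x → sizeT (θ x) < sizeT (subst θ t)) := by
  refine term_induction (Q := fun ts => occursList x ts = true →
      sizeT (θ x) ≤ sizeL (substList θ ts)) ?_ ?_ ?_ ?_ ?_
  · intro y hy
    simp [occurs] at hy
    subst hy
    simp [subst]
  · intro c τ hc; simp [occurs] at hc
  · intro f ts ih h
    simp only [occurs] at h
    have := ih h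
    constructor
    · simp only [subst, sizeT]; omega
    · intro _; simp only [subst, sizeT]; omega
  · intro h; simp [occursList] at h
  · intro t ts iht ihts h
    simp only [occursList, Bool.or_eq_true] at h
    rcases h with h | h
    · have := (iht h).1
      simp only [substList, sizeL]; omega
    · have := ihts h
      simp only [substList, sizeL]; omega

theorem occurs_no_unifier {x : ℕ} {t : Term} (h1 : occurs x t = true)
    (h2 : t ≠ .var x) (θ : ℕ → Term) : θ x ≠ subst θ t := by
  intro he
  have := (occurs_size x θ t h1).2 h2
  rw [← he] at this
  omega

/-- If θ x = subst θ u then applying (single x u) before θ changes nothing. -/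
theorem subst_single_absorb (θ : ℕ → Term) (x : ℕ) (u : Term)
    (hx : θ x = subst θ u) : ∀ t, subst θ (subst (single x u) t) = subst θ t := by
  refine term_induction (Q := fun ts =>
      substList θ (substList (single x u) ts) = substList θ ts) ?_ ?_ ?_ ?_ ?_
  · intro y
    by_cases hyx : y = x
    · subst hyx; simp [subst, single, ← hx]
    · simp [subst, single, hyx]
  · intro c τ; simp [subst]
  · intro f ts ih; simp [subst, ih]
  · simp [substList]
  · intro t ts iht ihts; simp [substList, iht, ihts]

theorem subst_comp (θ η : ℕ → Term) : ∀ t, subst (comp θ η) t = subst θ (subst η t) := by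
  refine term_induction (Q := fun ts =>
      substList (comp θ η) ts = substList θ (substList η ts)) ?_ ?_ ?_ ?_ ?_
  · intro y; simp [subst, comp]
  · intro c τ; simp [subst]
  · intro f ts ih; simp [subst, ih]
  · simp [substList]
  · intro t ts iht ihts; simp [substList, iht, ihts]

mutual
  def collapse : Term → Term
    | .var y => .var y
    | .const _ τ => .const 0 τ
    | .app f ts => .app f (collapseL ts)
  def collapseL : List Term → List Term
    | [] => []
    | t :: ts => collapse t :: collapseL ts
end

theorem collapse_subst (θ : ℕ → Term) :
    ∀ t, collapse (subst θ t) = subst (fun y => collapse (θ y)) (collapse t) := by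
  refine term_induction (Q := fun ts =>
      collapseL (substList θ ts) = substList (fun y => collapse (θ y)) (collapseL ts)) ?_ ?_ ?_ ?_ ?_
  · intro y; simp [subst, collapse]
  · intro c τ; simp [subst, collapse]
  · intro f ts ih; simp [subst, collapse, ih]
  · simp [substList, collapseL]
  · intro t ts iht ihts; simp [substList, collapseL, iht, ihts]

mutual
  def typeOf : Term → Typ
    | .var _ => .base .int
    | .const _ τ => .base τ
    | .app f ts => .comp f (typeOfL ts)
  def typeOfL : List Term → List Typ
    | [] => []
    | t :: ts => typeOf t :: typeOfL ts
end

theorem typeOf_subst_collapse (θ : ℕ → Term) :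
    ∀ t, typeOf (subst θ (collapse t)) = typeOf (subst θ t) := by
  refine term_induction (Q := fun ts =>
      typeOfL (substList θ (collapseL ts)) = typeOfL (substList θ ts)) ?_ ?_ ?_ ?_ ?_
  · intro y; simp [collapse]
  · intro c τ; simp [collapse, subst, typeOf]
  · intro f ts ih; simp [collapse, subst, typeOf, ih]
  · simp [collapseL, substList]
  · intro t ts iht ihts; simp [collapseL, substList, typeOfL, iht, ihts]

theorem typeOfL_eq_map (ts : List Term) : typeOfL ts = ts.map typeOf := by
  induction ts with
  | nil => simp [typeOfL]
  | cons t ts ih => simp [typeOfL, ih]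

theorem hasType_typeOf : ∀ t : Term, (∀ x, occurs x t = false) → HasType t (typeOf t) := by
  refine term_induction (Q := fun ts => (∀ x, occursList x ts = false) →
      ∀ s ∈ ts, HasType s (typeOf s)) ?_ ?_ ?_ ?_ ?_
  · intro y h; have := h y; simp [occurs] at this
  · intro c τ _; exact HasType.const c τ
  · intro f ts ih h
    have h' : ∀ x, occursList x ts = false := fun x => by
      have := h x; simpa [occurs] using this
    have := ih h'
    rw [typeOf, typeOfL_eq_map]
    refine HasType.app f ts (ts.map typeOf) (by simp) ?_
    intro i h1 h2
    simp only [List.get_eq_getElem, List.getElem_map]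
    exact this _ (List.getElem_mem h1)
  · intro _ s hs; simp at hs
  · intro t ts iht ihts h s hs
    have h1 : ∀ x, occurs x t = false := fun x => by
      have := h x; simp [occursList] at this; exact this.1
    have h2 : ∀ x, occursList x ts = false := fun x => by
      have := h x; simp [occursList] at this; exact this.2
    rcases List.mem_cons.mp hs with rfl | hs
    · exact iht h1
    · exact ihts h2 s hs

theorem subst_ground (θ : ℕ → Term) (hg : ∀ y x, occurs x (θ y) = false) :
    ∀ t, ∀ x, occurs x (subst θ t) = false := by
  refine term_induction (Q := fun ts => ∀ x, occursList x (substList θ ts) = false) ?_ ?_ ?_ ?_ ?_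
  · intro y x; simp [subst, hg]
  · intro c τ x; simp [subst, occurs]
  · intro f ts ih x; simp [subst, occurs, ih]
  · intro x; simp [substList, occursList]
  · intro t ts iht ihts x; simp [substList, occursList, iht, ihts]

theorem subst_id_of (θ : ℕ → Term) :
    ∀ t, (∀ y, occurs y t = true → θ y = .var y) → subst θ t = t := by
  refine term_induction (Q := fun ts =>
      (∀ y, occursList y ts = true → θ y = .var y) → substList θ ts = ts) ?_ ?_ ?_ ?_ ?_
  · intro y h; have := h y (by simp [occurs]); simp [subst, this]
  · intro c τ _; simp [subst]
  · intro f ts ih h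
    simp only [subst]
    rw [ih (fun y hy => h y (by simp [occurs, hy]))]
  · intro _; simp [substList]
  · intro t ts iht ihts h
    simp only [substList]
    rw [iht (fun y hy => h y (by simp [occursList, hy])),
        ihts (fun y hy => h y (by simp [occursList, hy]))]

end Aux
section Sys

def Unif (θ : ℕ → Term) (S : Multiset (Term × Term)) : Prop :=
  ∀ e ∈ S, subst θ e.1 = subst θ e.2

def SysUnif (S : Multiset (Term × Term)) : Prop := ∃ θ, Unif θ S

def collapseM (S : Multiset (Term × Term)) : Multiset (Term × Term) :=
  S.map (fun e => (collapse e.1, collapse e.2))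

theorem map_eq_of_zip {f : Term → Term} : ∀ (ts ss : List Term),
    ts.length = ss.length → (∀ p ∈ ts.zip ss, f p.1 = f p.2) →
    ts.map f = ss.map f := by
  intro ts
  induction ts with
  | nil =>
    intro ss h _
    obtain rfl : ss = [] := by simpa using h.symm
    rfl
  | cons t ts ih =>
    intro ss h hp
    cases ss with
    | nil => simp at h
    | cons s ss =>
      simp only [List.map_cons, List.cons.injEq]
      constructor
      · exact hp (t, s) (by simp [List.zip])
      · exact ih ss (by simpa using h) (fun p hpm => hp p (by simp [List.zip]; right; simpa [List.zip] using hpm))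

theorem zip_of_map_eq {f : Term → Term} : ∀ (ts ss : List Term),
    ts.map f = ss.map f → ∀ p ∈ ts.zip ss, f p.1 = f p.2 := by
  intro ts
  induction ts with
  | nil => intro ss _ p hp; simp at hp
  | cons t ts ih =>
    intro ss h p hp
    cases ss with
    | nil => simp at hp
    | cons s ss =>
      simp only [List.map_cons, List.cons.injEq] at h
      rcases List.mem_cons.mp hp with rfl | hp
      · exact h.1
      · exact ih ss h.2 p hp

/-- Forward invariant: a unifier of the system survives every step (and the
flag stays). -/
theorem step_unif {S : Multiset (Term × Term)} {F : Bool} {c' : Config}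
    (hs : Step (.state S F) c') (θ : ℕ → Term) (hu : Unif θ S) :
    ∃ S', c' = .state S' F ∧ Unif θ S' := by
  cases hs with
  | decompose f ts ss R F h =>
    refine ⟨_, rfl, ?_⟩
    have hd := hu (Term.app f ts, Term.app f ss) (Multiset.mem_cons_self _ _)
    simp only [subst, Term.app.injEq, substList_eq_map] at hd
    intro e he
    rw [Multiset.mem_add] at he
    rcases he with he | he
    · rw [Multiset.mem_coe] at he
      exact zip_of_map_eq ts ss hd.2 e he
    · exact hu e (Multiset.mem_cons_of_mem he)
  | clash f g ts ss R F h =>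
    exfalso
    have hd := hu (Term.app f ts, Term.app g ss) (Multiset.mem_cons_self _ _)
    simp only [subst, Term.app.injEq, substList_eq_map] at hd
    rcases h with h | h
    · exact h hd.1
    · exact h (by have := congrArg List.length hd.2; simpa using this)
  | constDel c τ R F =>
    exact ⟨_, rfl, fun e he => hu e (Multiset.mem_cons_of_mem he)⟩
  | constFalse c d τ R F h =>
    exfalso
    have hd := hu (Term.const c τ, Term.const d τ) (Multiset.mem_cons_self _ _)
    simp only [subst, Term.const.injEq] at hd
    exact h hd.1
  | constWrong c d τ σ R F h =>
    exfalso
    have hd := hu (Term.const c τ, Term.const d σ) (Multiset.mem_cons_self _ _)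
    simp only [subst, Term.const.injEq] at hd
    exact h hd.2
  | constApp c τ f ts R F =>
    exfalso
    have hd := hu (Term.const c τ, Term.app f ts) (Multiset.mem_cons_self _ _)
    simp [subst] at hd
  | appConst c τ f ts R F =>
    exfalso
    have hd := hu (Term.app f ts, Term.const c τ) (Multiset.mem_cons_self _ _)
    simp [subst] at hd
  | varDel x R F =>
    exact ⟨_, rfl, fun e he => hu e (Multiset.mem_cons_of_mem he)⟩
  | orient x t R F h =>
    refine ⟨_, rfl, ?_⟩
    intro e he
    rw [Multiset.mem_cons] at he
    rcases he with rfl | he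
    · exact (hu (t, Term.var x) (Multiset.mem_cons_self _ _)).symm
    · exact hu e (Multiset.mem_cons_of_mem he)
  | eliminate x t R F h1 h2 =>
    refine ⟨_, rfl, ?_⟩
    have hx : θ x = subst θ t := hu (Term.var x, t) (Multiset.mem_cons_self _ _)
    have hx' : subst θ (Term.var x) = subst θ t := by simpa [subst] using hx
    intro e he
    rw [Multiset.mem_cons] at he
    rcases he with rfl | he
    · exact hx'
    · rw [Multiset.mem_map] at he
      obtain ⟨e', he', rfl⟩ := he
      have := hu e' (Multiset.mem_cons_of_mem he')
      simp only [substEq]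
      rw [subst_single_absorb θ x t hx, subst_single_absorb θ x t hx]
      exact this
  | occursFail x t R F h1 h2 =>
    exfalso
    have hd := hu (Term.var x, t) (Multiset.mem_cons_self _ _)
    simp only [subst] at hd
    exact occurs_no_unifier h1 h2 θ hd

theorem reaches_unif {c c' : Config} (h : Reaches c c') :
    ∀ S F, c = .state S F → ∀ θ, Unif θ S →
    ∃ S', c' = .state S' F ∧ Unif θ S' := by
  induction h with
  | refl => intro S F rfl θ hu; exact ⟨S, rfl, hu⟩
  | tail hab hbc ih =>
    intro S F hc θ hu
    obtain ⟨S1, rfl, hu1⟩ := ih S F hc θ hu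
    exact step_unif hbc θ hu1

end Sys
section Back

theorem collapseL_eq_map (ts : List Term) : collapseL ts = ts.map collapse := by
  induction ts with
  | nil => simp [collapseL]
  | cons t ts ih => simp [collapseL, ih]

theorem single_collapse (x : ℕ) (t : Term) :
    (fun y => collapse (single x t y)) = single x (collapse t) := by
  funext y
  by_cases hy : y = x <;> simp [single, hy, collapse]

/-- Backward invariant on collapsed systems, for non-occurs-check states. -/
theorem step_back {S S' : Multiset (Term × Term)} {F F' : Bool}
    (hs : Step (.state S F) (.state S' F'))
    (hnoc : ¬ ∃ (x : ℕ) (t : Term) (R : Multiset (Term × Term)),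
        S = (Term.var x, t) ::ₘ R ∧ occurs x t = true ∧ t ≠ Term.var x)
    (h : SysUnif (collapseM S')) : SysUnif (collapseM S) := by
  obtain ⟨θ, hu⟩ := h
  cases hs with
  | decompose f ts ss R F hlen =>
    refine ⟨θ, ?_⟩
    intro e he
    simp only [collapseM, Multiset.map_cons, Multiset.mem_cons] at he
    rcases he with rfl | he
    · simp only [collapse, subst, Term.app.injEq, substList_eq_map, collapseL_eq_map,
        List.map_map, true_and]
      refine map_eq_of_zip ts ss hlen ?_
      intro p hp
      have : (collapse p.1, collapse p.2) ∈ collapseM (↑(ts.zip ss) + R) := by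
        simp only [collapseM, Multiset.mem_map]
        exact ⟨p, by simp [hp], rfl⟩
      simpa using hu _ this
    · exact hu e (by simpa [collapseM] using Or.inr (by simpa [collapseM] using he))
  | constDel c τ R F =>
    refine ⟨θ, ?_⟩
    intro e he
    simp only [collapseM, Multiset.map_cons, Multiset.mem_cons] at he
    rcases he with rfl | he
    · rfl
    · exact hu e (by simpa [collapseM] using he)
  | constFalse c d τ R F hcd =>
    refine ⟨θ, ?_⟩
    intro e he
    simp only [collapseM, Multiset.map_cons, Multiset.mem_cons] at he
    rcases he with rfl | he
    · simp [collapse]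
    · exact hu e (by simpa [collapseM] using he)
  | varDel x R F =>
    refine ⟨θ, ?_⟩
    intro e he
    simp only [collapseM, Multiset.map_cons, Multiset.mem_cons] at he
    rcases he with rfl | he
    · rfl
    · exact hu e (by simpa [collapseM] using he)
  | orient x t R F hv =>
    refine ⟨θ, ?_⟩
    intro e he
    simp only [collapseM, Multiset.map_cons, Multiset.mem_cons] at he
    rcases he with rfl | he
    · have : (collapse (Term.var x), collapse t) ∈ collapseM ((Term.var x, t) ::ₘ R) := by
        simp [collapseM]
      exact (hu _ this).symm
    · refine hu e ?_
      simp only [collapseM, Multiset.map_cons, Multiset.mem_cons]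
      exact Or.inr (by simpa [collapseM] using he)
  | eliminate x t R F h1 h2 =>
    refine ⟨θ, ?_⟩
    have hhead : (collapse (Term.var x), collapse t) ∈
        collapseM ((Term.var x, t) ::ₘ R.map (substEq x t)) := by simp [collapseM]
    have hx : θ x = subst θ (collapse t) := by
      have := hu _ hhead
      simpa [collapse, subst] using this
    intro e he
    simp only [collapseM, Multiset.map_cons, Multiset.mem_cons] at he
    rcases he with rfl | he
    · have := hu _ hhead
      simpa using this
    · rw [Multiset.mem_map] at he
      obtain ⟨e', he', rfl⟩ := he
      have hmem : (collapse (subst (single x t) e'.1), collapse (subst (single x t) e'.2)) ∈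
          collapseM ((Term.var x, t) ::ₘ R.map (substEq x t)) := by
        simp only [collapseM, Multiset.map_cons, Multiset.mem_cons]
        right
        rw [Multiset.mem_map]
        refine ⟨substEq x t e', Multiset.mem_map_of_mem _ he', rfl⟩
      have h3 := hu _ hmem
      simp only [collapse_subst, single_collapse] at h3
      rw [subst_single_absorb θ x (collapse t) hx, subst_single_absorb θ x (collapse t) hx] at h3
      exact h3
  | occursFail x t R F h1 h2 =>
    exact absurd ⟨x, t, _, rfl, h1, h2⟩ hnoc

theorem sysUnif_collapse {S : Multiset (Term × Term)} (h : SysUnif S) :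
    SysUnif (collapseM S) := by
  obtain ⟨θ, hu⟩ := h
  refine ⟨fun y => collapse (θ y), ?_⟩
  intro e he
  simp only [collapseM, Multiset.mem_map] at he
  obtain ⟨a, ha, rfl⟩ := he
  simp only [← collapse_subst]
  rw [hu a ha]

end Back
section Normal

noncomputable local instance : DecidableEq Term := fun _ _ => Classical.propDecidable _

theorem normal_head {S : Multiset (Term × Term)} {F : Bool}
    (hn : NormalCfg (.state S F)) :
    ∀ e ∈ S, ∃ x, e.1 = Term.var x ∧ occurs x e.2 = false := by
  rintro ⟨l, r⟩ he
  have hS : S = (l, r) ::ₘ S.erase (l, r) := (Multiset.cons_erase he).symm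
  cases l with
  | var x =>
    refine ⟨x, rfl, ?_⟩
    by_cases h2 : occurs x r = true
    · by_cases h3 : r = Term.var x
      · exact absurd (by rw [hS, h3]; exact Step.varDel x _ F) (hn _)
      · exact absurd (by rw [hS]; exact Step.occursFail x r _ F h2 h3) (hn _)
    · simpa using h2
  | const c τ =>
    exfalso
    cases r with
    | var y =>
      exact hn _ (by rw [hS]; exact Step.orient y (Term.const c τ) _ F (fun y' => by simp))
    | const d σ =>
      by_cases hτ : τ = σ
      · subst hτ
        by_cases hc : c = d
        · subst hc
          exact hn _ (by rw [hS]; exact Step.constDel c τ _ F)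
        · exact hn _ (by rw [hS]; exact Step.constFalse c d τ _ F hc)
      · exact hn _ (by rw [hS]; exact Step.constWrong c d τ σ _ F hτ)
    | app g ss =>
      exact hn _ (by rw [hS]; exact Step.constApp c τ g ss _ F)
  | app f ts =>
    exfalso
    cases r with
    | var y =>
      exact hn _ (by rw [hS]; exact Step.orient y (Term.app f ts) _ F (fun y' => by simp))
    | const d σ =>
      exact hn _ (by rw [hS]; exact Step.appConst d σ f ts _ F)
    | app g ss =>
      by_cases hfg : f = g
      · subst hfg
        by_cases hlen : ts.length = ss.length
        · exact hn _ (by rw [hS]; exact Step.decompose f ts ss _ F hlen)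
        · exact hn _ (by rw [hS]; exact Step.clash f f ts ss _ F (Or.inr hlen))
      · exact hn _ (by rw [hS]; exact Step.clash f g ts ss _ F (Or.inl hfg))

theorem normal_no_other {S : Multiset (Term × Term)} {F : Bool}
    (hn : NormalCfg (.state S F)) :
    ∀ x t, (Term.var x, t) ∈ S → ∀ e' ∈ S.erase (Term.var x, t),
      occurs x e'.1 = false ∧ occurs x e'.2 = false := by
  intro x t ht e' he'
  have hocc : occurs x t = false := by
    obtain ⟨x', hx', ho⟩ := normal_head hn _ ht
    simp only at hx'
    obtain rfl : x = x' := Term.var.inj hx'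
    exact ho
  by_contra hcon
  have hor : occurs x e'.1 = true ∨ occurs x e'.2 = true := by
    rcases Bool.eq_false_or_eq_true (occurs x e'.1) with h | h
    · exact Or.inl h
    · rcases Bool.eq_false_or_eq_true (occurs x e'.2) with h2 | h2
      · exact Or.inr h2
      · exact absurd ⟨h, h2⟩ hcon
  have hS : S = (Term.var x, t) ::ₘ S.erase (Term.var x, t) := (Multiset.cons_erase ht).symm
  refine hn (.state ((Term.var x, t) ::ₘ (S.erase (Term.var x, t)).map (substEq x t)) F) ?_
  nth_rewrite 1 [hS]
  exact Step.eliminate x t _ F hocc ⟨e', he', hor⟩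

theorem normal_sysUnif {S : Multiset (Term × Term)} {F : Bool}
    (hn : NormalCfg (.state S F)) : SysUnif S := by
  classical
  set θ : ℕ → Term :=
    fun y => if h : ∃ t, (Term.var y, t) ∈ S then h.choose else Term.var y with hθ
  refine ⟨θ, ?_⟩
  have hC : ∀ y s, (Term.var y, s) ∈ S → θ y = s := by
    intro y s hys
    have hex : ∃ t, (Term.var y, t) ∈ S := ⟨s, hys⟩
    rw [hθ]
    simp only
    rw [dif_pos hex]
    by_contra hne
    have hch : (Term.var y, hex.choose) ∈ S := hex.choose_spec
    have hmem : (Term.var y, hex.choose) ∈ S.erase (Term.var y, s) :=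
      (Multiset.mem_erase_of_ne (by simp [Prod.mk.injEq, hne])).mpr hch
    have := (normal_no_other hn y s hys _ hmem).1
    simp [occurs] at this
  have hD : ∀ y, (¬ ∃ t, (Term.var y, t) ∈ S) → θ y = Term.var y := by
    intro y h
    rw [hθ]
    simp only
    rw [dif_neg h]
  rintro ⟨l, r⟩ he
  obtain ⟨x, hx, ho⟩ := normal_head hn _ he
  simp only at hx
  subst hx
  have hr : subst θ r = r := by
    apply subst_id_of
    intro y hy
    apply hD
    rintro ⟨s, hys⟩
    by_cases heq : (Term.var y, s) = (Term.var x, r)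
    · rw [Prod.mk.injEq] at heq
      obtain ⟨h1, h2⟩ := heq
      obtain rfl : y = x := Term.var.inj h1
      rw [hy] at ho
      exact Bool.noConfusion ho
    · have hmem : (Term.var x, r) ∈ S.erase (Term.var y, s) :=
        (Multiset.mem_erase_of_ne (fun hq => heq hq.symm)).mpr he
      have := (normal_no_other hn y s hys _ hmem).2
      simp only at this
      rw [hy] at this
      exact Bool.noConfusion this
  show subst θ (Term.var x) = subst θ r
  rw [hr]
  show θ x = r
  exact hC x r he

end Normal
section Path

theorem reaches_of_wrong {c : Config} (h : Reaches .wrong c) : c = .wrong := by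
  rcases Relation.ReflTransGen.cases_head h with h | ⟨b, hb, _⟩
  · exact h.symm
  · cases hb

theorem path_lemma {cf : Config} {Sf : Multiset (Term × Term)}
    (h1 : cf = .state Sf false) (h2 : NormalCfg cf) :
    ∀ {c : Config}, Reaches c cf → ∀ S F, c = .state S F →
    (∃ x t R F', Reaches c (.state ((Term.var x, t) ::ₘ R) F') ∧
        occurs x t = true ∧ t ≠ Term.var x)
    ∨ SysUnif (collapseM S) := by
  intro c h
  induction h using Relation.ReflTransGen.head_induction_on with
  | refl =>
    intro S F h3
    right
    rw [h1] at h3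
    obtain ⟨rfl, rfl⟩ : Sf = S ∧ false = F := by
      simpa using congrArg (fun x => x) h3
    rw [h1] at h2
    exact sysUnif_collapse (normal_sysUnif h2)
  | @head a c' hstep hreach ih =>
    intro S F h3
    subst h3
    by_cases hocc : ∃ (x : ℕ) (t : Term) (R : Multiset (Term × Term)),
        S = (Term.var x, t) ::ₘ R ∧ occurs x t = true ∧ t ≠ Term.var x
    · obtain ⟨x, t, R, hS, ho, hne⟩ := hocc
      exact Or.inl ⟨x, t, R, F, by rw [hS]; exact Relation.ReflTransGen.refl, ho, hne⟩
    · cases c' with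
      | wrong =>
        rw [reaches_of_wrong hreach] at h1
        cases h1
      | state S2 F2 =>
        rcases ih S2 F2 rfl with ⟨x, t, R, F', hr, ho, hne⟩ | hsu
        · exact Or.inl ⟨x, t, R, F', Relation.ReflTransGen.head hstep hr, ho, hne⟩
        · exact Or.inr (step_back hstep hocc hsu)

end Path
/-- if typed unification outputs false on {t₁ = t₂}, then t₁
and t₂ are not unifiable, but either some substitution θ gives θ(t₁) and
θ(t₂) the same type, or the failure is due to the occurs check. -/
theorem outputs_false_characterization (t₁ t₂ : Term)
    (h : OutputsFalse {(t₁, t₂)}) :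
    (¬ ∃ θ : ℕ → Term, IsUnifier θ t₁ t₂) ∧
    ((∃ (θ : ℕ → Term) (τ : Typ),
        HasType (subst θ t₁) τ ∧ HasType (subst θ t₂) τ) ∨
      OccursCheckFailure t₁ t₂) := by
  obtain ⟨Sf, hr, hn⟩ := h
  constructor
  · rintro ⟨θ0, hθ0⟩
    have hu : Unif θ0 {(t₁, t₂)} := by
      intro e he
      rw [Multiset.mem_singleton] at he
      subst he
      exact hθ0
    obtain ⟨S'', heq, _⟩ := reaches_unif hr _ true rfl θ0 hu
    simp at heq
  · rcases path_lemma rfl hn hr {(t₁, t₂)} true rfl with ⟨x, t, R, F', hre, ho, hne⟩ | hsu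
    · exact Or.inr ⟨x, t, R, F', hre, ho, hne⟩
    · left
      obtain ⟨θ', hu⟩ := hsu
      have hcc : subst θ' (collapse t₁) = subst θ' (collapse t₂) := by
        refine hu (collapse t₁, collapse t₂) ?_
        simp [collapseM]
      set g : ℕ → Term := fun _ => Term.const 0 Ty.int with hg
      set θ : ℕ → Term := comp g θ' with hθdef
      have hgg : ∀ y x, occurs x (g y) = false := by intro y x; simp [hg, occurs]
      have hground : ∀ y x, occurs x (θ y) = false := by
        intro y x
        exact subst_ground g hgg (θ' y) x
      have heq2 : subst θ (collapse t₁) = subst θ (collapse t₂) := by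
        rw [hθdef, subst_comp, subst_comp, hcc]
      refine ⟨θ, typeOf (subst θ (collapse t₁)), ?_, ?_⟩
      · rw [typeOf_subst_collapse]
        exact hasType_typeOf _ (fun x => subst_ground θ hground t₁ x)
      · rw [heq2, typeOf_subst_collapse]
        exact hasType_typeOf _ (fun x => subst_ground θ hground t₂ x)
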